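/- arXiv:1208.4867 — 3 statements merged into one kernel-verified Lean document; each statement's English description precedes it below -/
import Mathlib

section
/- Assume G(V,E) satisfies the sufficient condition for parameter f. For any partition of V into sets A, B, F where A and B are both nonempty and |F| ≤ f, if B ⇏ A, then A propagates to B. -/
open Finset Filter

variable {V : Type} [Fintype V] [DecidableEq V]

/-- Incoming neighbors of node `v` in the directed graph with edge set `E`. -/
def NinSet (E : Finset (V × V)) (v : V) : Finset V :=
  Finset.univ.filter (fun u => (u, v) ∈ E)

/-- `A ⇒ B`: there is a node in `B` with more than 1/3 of its incoming neighbors in `A`. -/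
def ImpRel (E : Finset (V × V)) (A B : Finset V) : Prop :=
  ∃ v ∈ B, (NinSet E v).card < 3 * ((NinSet E v) ∩ A).card

/-- `in(A ⇒ B)`: the set of nodes in `B` with more than 1/3 of incoming neighbors in `A`. -/
def inRel (E : Finset (V × V)) (A B : Finset V) : Finset V :=
  B.filter (fun v => (NinSet E v).card < 3 * ((NinSet E v) ∩ A).card)

/-- `A` propagates to `B` in `l` steps. -/
def PropagatesIn (E : Finset (V × V)) (A B : Finset V) (l : ℕ) : Prop :=
  0 < l ∧ ∃ As Bs : ℕ → Finset V,
    As 0 = A ∧ Bs 0 = B ∧ As l = A ∪ B ∧ Bs l = ∅ ∧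
    (∀ τ < l, Bs τ ≠ ∅) ∧
    (∀ τ < l, ImpRel E (As τ) (Bs τ) ∧
      As (τ + 1) = As τ ∪ inRel E (As τ) (Bs τ) ∧
      Bs (τ + 1) = Bs τ \ inRel E (As τ) (Bs τ))

/-- `A` propagates to `B` (in some number of steps). -/
def Propagates (E : Finset (V × V)) (A B : Finset V) : Prop :=
  ∃ l, PropagatesIn E A B l

/-- The sufficient condition for parameter `f`. -/
def SuffCond (E : Finset (V × V)) (f : ℕ) : Prop :=
  (∀ v : V, 3 * f ≤ (NinSet E v).card) ∧
  (∀ F L C R : Finset V,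
    F ∪ L ∪ C ∪ R = Finset.univ →
    Disjoint F L → Disjoint F C → Disjoint F R →
    Disjoint L C → Disjoint L R → Disjoint C R →
    L.Nonempty → R.Nonempty → F.card ≤ f →
    ImpRel E (C ∪ R) L ∨ ImpRel E (L ∪ C) R)

/-- The weight `a_i = 1/(|N_i^-| - 2⌊|N_i^-|/3⌋ + 1)` used in the Middle algorithm. -/
noncomputable def middleWeight (E : Finset (V × V)) (i : V) : ℝ :=
  (((NinSet E i).card - 2 * ((NinSet E i).card / 3) + 1 : ℕ) : ℝ)⁻¹

/-- `α = min_{i ∈ V} a_i`. -/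
noncomputable def alphaMin (E : Finset (V × V)) : ℝ :=
  ⨅ i : V, middleWeight E i

/-- An execution of the Middle algorithm on graph `E` with faulty set `F`. -/
structure MiddleExec (E : Finset (V × V)) (F : Finset V) where
  /-- `state i t` is the state `v_i[t]` (meaningful for fault-free `i`). -/
  state : V → ℕ → ℝ
  /-- `w t i j` is the value node `i` receives from `j ∈ N_i^-` in iteration `t ≥ 1`. -/
  w : ℕ → V → V → ℝ
  /-- the set `B` at node `i` in iteration `t`. -/
  Bs : ℕ → V → Finset V
  /-- the set `T` at node `i` in iteration `t`. -/
  Ts : ℕ → V → Finset V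
  /-- the set `M` at node `i` in iteration `t`. -/
  Ms : ℕ → V → Finset V
  w_honest : ∀ t, 1 ≤ t → ∀ i, i ∉ F → ∀ j ∈ NinSet E i, j ∉ F →
    w t i j = state j (t - 1)
  part_union : ∀ t, 1 ≤ t → ∀ i, i ∉ F → Bs t i ∪ Ts t i ∪ Ms t i = NinSet E i
  disj_BT : ∀ t, 1 ≤ t → ∀ i, i ∉ F → Disjoint (Bs t i) (Ts t i)
  disj_BM : ∀ t, 1 ≤ t → ∀ i, i ∉ F → Disjoint (Bs t i) (Ms t i)
  disj_TM : ∀ t, 1 ≤ t → ∀ i, i ∉ F → Disjoint (Ts t i) (Ms t i)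
  card_B : ∀ t, 1 ≤ t → ∀ i, i ∉ F → (Bs t i).card = (NinSet E i).card / 3
  card_T : ∀ t, 1 ≤ t → ∀ i, i ∉ F → (Ts t i).card = (NinSet E i).card / 3
  le_BM : ∀ t, 1 ≤ t → ∀ i, i ∉ F → ∀ j ∈ Bs t i, ∀ k ∈ Ms t i, w t i j ≤ w t i k
  le_MT : ∀ t, 1 ≤ t → ∀ i, i ∉ F → ∀ j ∈ Ms t i, ∀ k ∈ Ts t i, w t i j ≤ w t i k
  update : ∀ t, 1 ≤ t → ∀ i, i ∉ F →
    state i t = middleWeight E i * (state i (t - 1) + ∑ j ∈ Ms t i, w t i j)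

/-- `U[t]`: the maximum state among fault-free nodes at the end of iteration `t`. -/
noncomputable def Umax {E : Finset (V × V)} {F : Finset V}
    (exec : MiddleExec E F) (t : ℕ) : ℝ :=
  ⨆ i : {i : V // i ∉ F}, exec.state i.1 t

/-- `μ[t]`: the minimum state among fault-free nodes at the end of iteration `t`. -/
noncomputable def muMin {E : Finset (V × V)} {F : Finset V}
    (exec : MiddleExec E F) (t : ℕ) : ℝ :=
  ⨅ i : {i : V // i ∉ F}, exec.state i.1 t


lemma inRel_subset (E : Finset (V × V)) (A B : Finset V) : inRel E A B ⊆ B :=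
  filter_subset _ _

lemma impRel_iff_inRel_nonempty {E : Finset (V × V)} {A B : Finset V} :
    ImpRel E A B ↔ (inRel E A B).Nonempty := by
  simp only [ImpRel, inRel, filter_nonempty_iff]

lemma ImpRel.mono {E : Finset (V × V)} {A A' B : Finset V} (h : ImpRel E A B)
    (hAA' : A ⊆ A') : ImpRel E A' B := by
  obtain ⟨v, hv, hlt⟩ := h
  have : #(NinSet E v ∩ A) ≤ #(NinSet E v ∩ A') := card_le_card (inter_subset_inter le_rfl hAA')
  exact ⟨v, hv, by omega⟩

lemma exists_eq_empty_of_card_succ_lt {α : Type*} (s : ℕ → Finset α)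
    (h : ∀ n, (s n).Nonempty → #(s (n + 1)) < #(s n)) : ∃ n, s n = ∅ := by
  by_contra! hne
  have hbound : ∀ n, #(s n) + n ≤ #(s 0) := by
    intro n
    induction n with
    | zero => rfl
    | succ n ih => have := h n (hne n); omega
  have := hbound (#(s 0) + 1)
  omega

def propStep (E : Finset (V × V)) (p : Finset V × Finset V) : Finset V × Finset V :=
  (p.1 ∪ inRel E p.1 p.2, p.2 \ inRel E p.1 p.2)

section propStep

variable (E : Finset (V × V)) (p : Finset V × Finset V)

lemma fst_subset_propStep_fst : p.1 ⊆ (propStep E p).1 := subset_union_left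

lemma propStep_snd_subset : (propStep E p).2 ⊆ p.2 := sdiff_subset

lemma propStep_fst_union_snd : (propStep E p).1 ∪ (propStep E p).2 = p.1 ∪ p.2 := by
  rw [propStep, union_assoc, union_sdiff_of_subset (inRel_subset E _ _)]

variable {E p}

lemma disjoint_propStep (h : Disjoint p.1 p.2) : Disjoint (propStep E p).1 (propStep E p).2 :=
  disjoint_union_left.2 ⟨h.mono_right sdiff_subset, disjoint_sdiff⟩

lemma card_propStep_snd_lt (h : ImpRel E p.1 p.2) : #(propStep E p).2 < #p.2 :=
  card_lt_card (sdiff_ssubset (inRel_subset E _ _) (impRel_iff_inRel_nonempty.1 h))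

end propStep

/-- The witness is the orbit of `(A, B)` under `propStep`, which ends because the second
component shrinks at every step. -/
theorem propagates_of_forall_impRel {E : Finset (V × V)} {A B : Finset V}
    (hB : B.Nonempty) (hAB : Disjoint A B)
    (himp : ∀ A' B' : Finset V, A ⊆ A' → B' ⊆ B → Disjoint A' B' → A' ∪ B' = A ∪ B →
      B'.Nonempty → ImpRel E A' B') :
    Propagates E A B := by
  set p : ℕ → Finset V × Finset V := fun τ => (propStep E)^[τ] (A, B)
  have hsucc (τ : ℕ) : p (τ + 1) = propStep E (p τ) := Function.iterate_succ_apply' _ _ _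
  have hinv (τ : ℕ) : A ⊆ (p τ).1 ∧ (p τ).2 ⊆ B ∧ Disjoint (p τ).1 (p τ).2 ∧
      (p τ).1 ∪ (p τ).2 = A ∪ B := by
    induction τ with
    | zero => exact ⟨subset_rfl, subset_rfl, hAB, rfl⟩
    | succ τ ih =>
      obtain ⟨hAsub, hBsub, hdisj, hunion⟩ := ih
      rw [hsucc]
      exact ⟨hAsub.trans (fst_subset_propStep_fst E _), (propStep_snd_subset E _).trans hBsub,
        disjoint_propStep hdisj, (propStep_fst_union_snd E _).trans hunion⟩
  have hstep (τ : ℕ) (hne : (p τ).2.Nonempty) : ImpRel E (p τ).1 (p τ).2 :=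
    himp _ _ (hinv τ).1 (hinv τ).2.1 (hinv τ).2.2.1 (hinv τ).2.2.2 hne
  have hterm : ∃ τ, (p τ).2 = ∅ := exists_eq_empty_of_card_succ_lt (fun τ => (p τ).2)
    fun τ hne => hsucc τ ▸ card_propStep_snd_lt (hstep τ hne)
  have hmin (τ : ℕ) (hτ : τ < Nat.find hterm) : (p τ).2 ≠ ∅ := Nat.find_min hterm hτ
  have hend : (p (Nat.find hterm)).2 = ∅ := Nat.find_spec hterm
  have hpos : 0 < Nat.find hterm :=
    Nat.pos_of_ne_zero fun h0 => hB.ne_empty (by rwa [h0] at hend)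
  refine ⟨Nat.find hterm, hpos, fun τ => (p τ).1, fun τ => (p τ).2, rfl, rfl, ?_, hend, hmin,
    fun τ hτ => ⟨hstep τ (nonempty_iff_ne_empty.2 (hmin τ hτ)), congrArg Prod.fst (hsucc τ),
      congrArg Prod.snd (hsucc τ)⟩⟩
  simpa only [hend, union_empty] using (hinv (Nat.find hterm)).2.2.2

/-- Apply the sufficient condition to the partition `F, L = B', C = A' − A, R = A`: since
`L ∪ C ⊆ B` and `B ⇏ A`, the alternative `L ∪ C ⇒ R` is excluded, leaving `C ∪ R = A' ⇒ B'`. -/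
theorem SuffCond.impRel_of_not_impRel {E : Finset (V × V)} {f : ℕ} (hsuff : SuffCond E f)
    {A B F A' B' : Finset V} (hpart : A ∪ B ∪ F = univ) (hAB : Disjoint A B)
    (hAF : Disjoint A F) (hBF : Disjoint B F) (hA : A.Nonempty) (hF : #F ≤ f)
    (hBA : ¬ ImpRel E B A) (hAA' : A ⊆ A') (hB'B : B' ⊆ B) (hA'B' : Disjoint A' B')
    (hunion : A' ∪ B' = A ∪ B) (hB' : B'.Nonempty) :
    ImpRel E A' B' := by
  have hC : A' \ A ⊆ B := fun x hx => by
    have hx' : x ∈ A ∪ B := hunion ▸ mem_union_left B' (mem_sdiff.1 hx).1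
    exact (mem_union.1 hx').resolve_left (mem_sdiff.1 hx).2
  have hcover : F ∪ B' ∪ (A' \ A) ∪ A = univ := by
    rw [← hpart, union_assoc, union_assoc, sdiff_union_of_subset hAA', union_comm B', hunion,
      union_comm]
  rcases hsuff.2 F B' (A' \ A) A hcover (hBF.symm.mono_right hB'B) (hBF.symm.mono_right hC)
      hAF.symm (hA'B'.symm.mono_right sdiff_subset) (hAB.symm.mono_left hB'B) sdiff_disjoint
      hB' hA hF with h | h
  · rwa [sdiff_union_of_subset hAA'] at h
  · exact absurd (h.mono (union_subset hB'B hC)) hBA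

theorem propagate_of_not_imp_general
    (E : Finset (V × V)) (f : ℕ)
    (hsuff : SuffCond E f) :
    ∀ A B F : Finset V,
      A ∪ B ∪ F = Finset.univ →
      Disjoint A B → Disjoint A F → Disjoint B F →
      A.Nonempty → B.Nonempty → F.card ≤ f →
      ¬ ImpRel E B A →
      Propagates E A B := by
  intro A B F hpart hAB hAF hBF hA hB hF hBA
  exact propagates_of_forall_impRel hB hAB fun _ _ hAA' hB'B hA'B' hunion hB' =>
    hsuff.impRel_of_not_impRel hpart hAB hAF hBF hA hF hBA hAA' hB'B hA'B' hunion hB'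

/-- if `B ⇏ A` then `A` propagates to `B`. -/
theorem propagate_of_not_imp
    (E : Finset (V × V)) (f : ℕ)
    (hn : 2 ≤ Fintype.card V)
    (hloop : ∀ v : V, (v, v) ∉ E)
    (hsuff : SuffCond E f) :
    ∀ A B F : Finset V,
      A ∪ B ∪ F = Finset.univ →
      Disjoint A B → Disjoint A F → Disjoint B F →
      A.Nonempty → B.Nonempty → F.card ≤ f →
      ¬ ImpRel E B A →
      Propagates E A B :=
  propagate_of_not_imp_general E f hsuff
end

section
/- Suppose G(V,E) satisfies the sufficient condition for parameter f, F is the set of Byzantine faulty nodes with |F| ≤ f, and consider an execution of the Middle algorithm. Suppose that at the end of iteration s, the fault-free nodes V∖F can be partitioned into nonempty sets R and L such that (i) R propagates to L in l steps, and (ii) the states {v_j[s] : j ∈ R} are contained in an interval of length at most (U[s] − μ[s])/2. Then U[s+l] − μ[s+l] ≤ (1 − α^l/2)·(U[s] − μ[s]). -/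
open Finset Filter

variable {V : Type} [Fintype V] [DecidableEq V]

section Aux

variable {E : Finset (V × V)} {F : Finset V} {f : ℕ}

lemma middleWeight_pos (E : Finset (V × V)) (i : V) : 0 < middleWeight E i := by
  unfold middleWeight
  rw [inv_pos]
  exact_mod_cast Nat.succ_pos _

lemma middleWeight_le_one (E : Finset (V × V)) (i : V) : middleWeight E i ≤ 1 := by
  unfold middleWeight
  apply inv_le_one_of_one_le₀
  exact_mod_cast Nat.succ_le_succ (Nat.zero_le _)

lemma alphaMin_le [Nonempty V] (E : Finset (V × V)) (i : V) :
    alphaMin E ≤ middleWeight E i :=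
  ciInf_le (Set.Finite.bddBelow (Set.finite_range _)) i

lemma alphaMin_pos [Nonempty V] (E : Finset (V × V)) : 0 < alphaMin E := by
  obtain ⟨i, hi⟩ := exists_eq_ciInf_of_finite (f := middleWeight E)
  rw [alphaMin, ← hi]
  exact middleWeight_pos E i

lemma alphaMin_le_one [Nonempty V] (E : Finset (V × V)) : alphaMin E ≤ 1 :=
  (alphaMin_le E (Classical.arbitrary V)).trans (middleWeight_le_one E _)

namespace MiddleExec

variable (exec : MiddleExec E F)

lemma card_M {t : ℕ} {i : V} (ht : 1 ≤ t) (hi : i ∉ F) :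
    (exec.Ms t i).card = (NinSet E i).card - 2 * ((NinSet E i).card / 3) := by
  have h := exec.part_union t ht i hi
  have h1 := exec.disj_BT t ht i hi
  have h2 := exec.disj_BM t ht i hi
  have h3 := exec.disj_TM t ht i hi
  have hb := exec.card_B t ht i hi
  have htt := exec.card_T t ht i hi
  have hcard : (NinSet E i).card
      = (exec.Bs t i).card + (exec.Ts t i).card + (exec.Ms t i).card := by
    rw [← h, Finset.card_union_of_disjoint (Finset.disjoint_union_left.2 ⟨h2, h3⟩),
      Finset.card_union_of_disjoint h1]
  omega

lemma weight_mul {t : ℕ} {i : V} (ht : 1 ≤ t) (hi : i ∉ F) :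
    middleWeight E i * ((exec.Ms t i).card + 1 : ℝ) = 1 := by
  have h := exec.card_M ht hi
  unfold middleWeight
  have h2 : ((NinSet E i).card - 2 * ((NinSet E i).card / 3) + 1 : ℕ)
      = (exec.Ms t i).card + 1 := by omega
  rw [h2]
  push_cast
  rw [inv_mul_cancel₀]
  positivity

lemma exists_le_honest {t : ℕ} {i : V} (ht : 1 ≤ t) (hi : i ∉ F)
    (hF : F.card ≤ f) (hf : 3 * f ≤ (NinSet E i).card)
    {k : V} (hk : k ∈ exec.Ms t i) :
    ∃ j, j ∉ F ∧ exec.w t i k ≤ exec.state j (t - 1) := by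
  have hpart := exec.part_union t ht i hi
  have hkN : k ∈ NinSet E i := by
    rw [← hpart]; exact Finset.mem_union_right _ hk
  have hkT : k ∉ exec.Ts t i := Finset.disjoint_right.1 (exec.disj_TM t ht i hi) hk
  have hcard : (insert k (exec.Ts t i)).card = (NinSet E i).card / 3 + 1 := by
    rw [Finset.card_insert_of_notMem hkT, exec.card_T t ht i hi]
  have hns : ¬ (insert k (exec.Ts t i) ⊆ F) := by
    intro hsub
    have := Finset.card_le_card hsub
    omega
  obtain ⟨j, hjS, hjF⟩ := Finset.not_subset.1 hns
  rcases Finset.mem_insert.1 hjS with rfl | hjT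
  · exact ⟨j, hjF, le_of_eq (exec.w_honest t ht i hi j hkN hjF)⟩
  · have hjN : j ∈ NinSet E i := by
      rw [← hpart]; exact Finset.mem_union_left _ (Finset.mem_union_right _ hjT)
    refine ⟨j, hjF, ?_⟩
    rw [← exec.w_honest t ht i hi j hjN hjF]
    exact exec.le_MT t ht i hi k hk j hjT

lemma exists_ge_honest {t : ℕ} {i : V} (ht : 1 ≤ t) (hi : i ∉ F)
    (hF : F.card ≤ f) (hf : 3 * f ≤ (NinSet E i).card)
    {k : V} (hk : k ∈ exec.Ms t i) :
    ∃ j, j ∉ F ∧ exec.state j (t - 1) ≤ exec.w t i k := by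
  have hpart := exec.part_union t ht i hi
  have hkN : k ∈ NinSet E i := by
    rw [← hpart]; exact Finset.mem_union_right _ hk
  have hkB : k ∉ exec.Bs t i := Finset.disjoint_right.1 (exec.disj_BM t ht i hi) hk
  have hcard : (insert k (exec.Bs t i)).card = (NinSet E i).card / 3 + 1 := by
    rw [Finset.card_insert_of_notMem hkB, exec.card_B t ht i hi]
  have hns : ¬ (insert k (exec.Bs t i) ⊆ F) := by
    intro hsub
    have := Finset.card_le_card hsub
    omega
  obtain ⟨j, hjS, hjF⟩ := Finset.not_subset.1 hns
  rcases Finset.mem_insert.1 hjS with rfl | hjB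
  · exact ⟨j, hjF, le_of_eq (exec.w_honest t ht i hi j hkN hjF).symm⟩
  · have hjN : j ∈ NinSet E i := by
      rw [← hpart]; exact Finset.mem_union_left _ (Finset.mem_union_left _ hjB)
    refine ⟨j, hjF, ?_⟩
    rw [← exec.w_honest t ht i hi j hjN hjF]
    exact exec.le_BM t ht i hi j hjB k hk

lemma step_le {t : ℕ} {i : V} (ht : 1 ≤ t) (hi : i ∉ F)
    (hF : F.card ≤ f) (hf : 3 * f ≤ (NinSet E i).card)
    {b U' : ℝ} (hbU : b ≤ U')
    (hall : ∀ j, j ∉ F → exec.state j (t - 1) ≤ U')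
    (hone : exec.state i (t - 1) ≤ b ∨ ∃ k ∈ exec.Ms t i, exec.w t i k ≤ b) :
    exec.state i t ≤ middleWeight E i * b + (1 - middleWeight E i) * U' := by
  have hMle : ∀ k ∈ exec.Ms t i, exec.w t i k ≤ U' := by
    intro k hk
    obtain ⟨j, hjF, hle⟩ := exec.exists_le_honest (f := f) ht hi hF hf hk
    exact hle.trans (hall j hjF)
  have hw := exec.weight_mul ht hi
  have hwpos := middleWeight_pos E i
  have key : exec.state i (t - 1) + ∑ j ∈ exec.Ms t i, exec.w t i j
      ≤ b + ((exec.Ms t i).card : ℝ) * U' := by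
    rcases hone with h1 | ⟨k, hkM, hkb⟩
    · have hsum : ∑ j ∈ exec.Ms t i, exec.w t i j ≤ ((exec.Ms t i).card : ℝ) * U' := by
        calc ∑ j ∈ exec.Ms t i, exec.w t i j ≤ ∑ _j ∈ exec.Ms t i, U' :=
              Finset.sum_le_sum (fun j hj => hMle j hj)
          _ = ((exec.Ms t i).card : ℝ) * U' := by rw [Finset.sum_const, nsmul_eq_mul]
      linarith
    · rw [← Finset.add_sum_erase _ _ hkM]
      have hc1 : 1 ≤ (exec.Ms t i).card := Finset.card_pos.2 ⟨k, hkM⟩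
      have hsum : ∑ j ∈ (exec.Ms t i).erase k, exec.w t i j
          ≤ (((exec.Ms t i).erase k).card : ℝ) * U' := by
        calc ∑ j ∈ (exec.Ms t i).erase k, exec.w t i j
            ≤ ∑ _j ∈ (exec.Ms t i).erase k, U' :=
              Finset.sum_le_sum (fun j hj => hMle j (Finset.mem_of_mem_erase hj))
          _ = _ := by rw [Finset.sum_const, nsmul_eq_mul]
      have hcast : (((exec.Ms t i).erase k).card : ℝ) = ((exec.Ms t i).card : ℝ) - 1 := by
        rw [Finset.card_erase_of_mem hkM]
        push_cast [hc1]
        ring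
      rw [hcast] at hsum
      have hselfU := hall i hi
      linarith
  calc exec.state i t
      = middleWeight E i * (exec.state i (t - 1) + ∑ j ∈ exec.Ms t i, exec.w t i j) :=
        exec.update t ht i hi
    _ ≤ middleWeight E i * (b + ((exec.Ms t i).card : ℝ) * U') :=
        mul_le_mul_of_nonneg_left key hwpos.le
    _ = middleWeight E i * b + (1 - middleWeight E i) * U' := by
        linear_combination U' * hw

lemma step_ge {t : ℕ} {i : V} (ht : 1 ≤ t) (hi : i ∉ F)
    (hF : F.card ≤ f) (hf : 3 * f ≤ (NinSet E i).card)
    {b L' : ℝ} (hbL : L' ≤ b)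
    (hall : ∀ j, j ∉ F → L' ≤ exec.state j (t - 1))
    (hone : b ≤ exec.state i (t - 1) ∨ ∃ k ∈ exec.Ms t i, b ≤ exec.w t i k) :
    middleWeight E i * b + (1 - middleWeight E i) * L' ≤ exec.state i t := by
  have hMge : ∀ k ∈ exec.Ms t i, L' ≤ exec.w t i k := by
    intro k hk
    obtain ⟨j, hjF, hle⟩ := exec.exists_ge_honest (f := f) ht hi hF hf hk
    exact (hall j hjF).trans hle
  have hw := exec.weight_mul ht hi
  have hwpos := middleWeight_pos E i
  have key : b + ((exec.Ms t i).card : ℝ) * L'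
      ≤ exec.state i (t - 1) + ∑ j ∈ exec.Ms t i, exec.w t i j := by
    rcases hone with h1 | ⟨k, hkM, hkb⟩
    · have hsum : ((exec.Ms t i).card : ℝ) * L' ≤ ∑ j ∈ exec.Ms t i, exec.w t i j := by
        calc ((exec.Ms t i).card : ℝ) * L' = ∑ _j ∈ exec.Ms t i, L' := by
              rw [Finset.sum_const, nsmul_eq_mul]
          _ ≤ ∑ j ∈ exec.Ms t i, exec.w t i j := Finset.sum_le_sum (fun j hj => hMge j hj)
      linarith
    · rw [← Finset.add_sum_erase _ _ hkM]
      have hc1 : 1 ≤ (exec.Ms t i).card := Finset.card_pos.2 ⟨k, hkM⟩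
      have hsum : (((exec.Ms t i).erase k).card : ℝ) * L'
          ≤ ∑ j ∈ (exec.Ms t i).erase k, exec.w t i j := by
        calc (((exec.Ms t i).erase k).card : ℝ) * L' = ∑ _j ∈ (exec.Ms t i).erase k, L' := by
              rw [Finset.sum_const, nsmul_eq_mul]
          _ ≤ _ := Finset.sum_le_sum (fun j hj => hMge j (Finset.mem_of_mem_erase hj))
      have hcast : (((exec.Ms t i).erase k).card : ℝ) = ((exec.Ms t i).card : ℝ) - 1 := by
        rw [Finset.card_erase_of_mem hkM]
        push_cast [hc1]
        ring
      rw [hcast] at hsum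
      have hselfL := hall i hi
      linarith
  calc middleWeight E i * b + (1 - middleWeight E i) * L'
      = middleWeight E i * (b + ((exec.Ms t i).card : ℝ) * L') := by
        linear_combination (-L') * hw
    _ ≤ middleWeight E i * (exec.state i (t - 1) + ∑ j ∈ exec.Ms t i, exec.w t i j) :=
        mul_le_mul_of_nonneg_left key hwpos.le
    _ = exec.state i t := (exec.update t ht i hi).symm

lemma exists_M_le {t : ℕ} {i : V} (ht : 1 ≤ t) (hi : i ∉ F) {A : Finset V}
    (hcard : (NinSet E i).card < 3 * ((NinSet E i) ∩ A).card)
    {b : ℝ} (hA : ∀ j ∈ NinSet E i ∩ A, exec.w t i j ≤ b) :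
    ∃ k ∈ exec.Ms t i, exec.w t i k ≤ b := by
  have hpart := exec.part_union t ht i hi
  have hB := exec.card_B t ht i hi
  have hnsub : ¬ (NinSet E i ∩ A ⊆ exec.Bs t i) := by
    intro hsub
    have := Finset.card_le_card hsub
    omega
  obtain ⟨j, hjIA, hjB⟩ := Finset.not_subset.1 hnsub
  have hjN : j ∈ NinSet E i := (Finset.mem_inter.1 hjIA).1
  have hjN' : j ∈ exec.Bs t i ∪ exec.Ts t i ∪ exec.Ms t i := by rw [hpart]; exact hjN
  rcases Finset.mem_union.1 hjN' with h | hM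
  · rcases Finset.mem_union.1 h with hB' | hT
    · exact absurd hB' hjB
    · have hTne : 1 ≤ (exec.Ts t i).card := Finset.card_pos.2 ⟨j, hT⟩
      have hT3 := exec.card_T t ht i hi
      have hMcard := exec.card_M ht hi
      have hM1 : 1 ≤ (exec.Ms t i).card := by omega
      obtain ⟨k, hk⟩ := Finset.card_pos.1 hM1
      exact ⟨k, hk, (exec.le_MT t ht i hi k hk j hT).trans (hA j hjIA)⟩
  · exact ⟨j, hM, hA j hjIA⟩

lemma exists_M_ge {t : ℕ} {i : V} (ht : 1 ≤ t) (hi : i ∉ F) {A : Finset V}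
    (hcard : (NinSet E i).card < 3 * ((NinSet E i) ∩ A).card)
    {b : ℝ} (hA : ∀ j ∈ NinSet E i ∩ A, b ≤ exec.w t i j) :
    ∃ k ∈ exec.Ms t i, b ≤ exec.w t i k := by
  have hpart := exec.part_union t ht i hi
  have hT := exec.card_T t ht i hi
  have hnsub : ¬ (NinSet E i ∩ A ⊆ exec.Ts t i) := by
    intro hsub
    have := Finset.card_le_card hsub
    omega
  obtain ⟨j, hjIA, hjT⟩ := Finset.not_subset.1 hnsub
  have hjN : j ∈ NinSet E i := (Finset.mem_inter.1 hjIA).1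
  have hjN' : j ∈ exec.Bs t i ∪ exec.Ts t i ∪ exec.Ms t i := by rw [hpart]; exact hjN
  rcases Finset.mem_union.1 hjN' with h | hM
  · rcases Finset.mem_union.1 h with hB | hT'
    · have hBne : 1 ≤ (exec.Bs t i).card := Finset.card_pos.2 ⟨j, hB⟩
      have hB3 := exec.card_B t ht i hi
      have hMcard := exec.card_M ht hi
      have hM1 : 1 ≤ (exec.Ms t i).card := by omega
      obtain ⟨k, hk⟩ := Finset.card_pos.1 hM1
      exact ⟨k, hk, (hA j hjIA).trans (exec.le_BM t ht i hi j hB k hk)⟩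
    · exact absurd hT' hjT
  · exact ⟨j, hM, hA j hjIA⟩

end MiddleExec

end Aux

/-- the interval containing the fault-free states shrinks after `l` iterations. -/
theorem interval_shrinks
    (E : Finset (V × V)) (f : ℕ)
    (hn : 2 ≤ Fintype.card V)
    (hloop : ∀ v : V, (v, v) ∉ E)
    (hsuff : SuffCond E f)
    (F : Finset V) (hF : F.card ≤ f)
    (exec : MiddleExec E F)
    (s l : ℕ) (R L : Finset V)
    (hpart : R ∪ L = Finset.univ \ F) (hdisj : Disjoint R L)
    (hRne : R.Nonempty) (hLne : L.Nonempty)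
    (hprop : PropagatesIn E R L l)
    (hconf : (⨆ j : {j : V // j ∈ R}, exec.state j.1 s) -
             (⨅ j : {j : V // j ∈ R}, exec.state j.1 s) ≤
             (Umax exec s - muMin exec s) / 2) :
    Umax exec (s + l) - muMin exec (s + l) ≤
      (1 - alphaMin E ^ l / 2) * (Umax exec s - muMin exec s) := by
  classical
  obtain ⟨r, hrR⟩ := hRne
  have hVF : ∀ x ∈ R ∪ L, x ∉ F := by
    intro x hx
    rw [hpart] at hx
    exact (Finset.mem_sdiff.1 hx).2
  have hRF : ∀ x ∈ R, x ∉ F := fun x hx => hVF x (Finset.mem_union_left _ hx)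
  haveI : Nonempty {i : V // i ∉ F} := ⟨⟨r, hRF r hrR⟩⟩
  haveI : Nonempty {j : V // j ∈ R} := ⟨⟨r, hrR⟩⟩
  haveI : Nonempty V := ⟨r⟩
  have hα0 : 0 < alphaMin E := alphaMin_pos E
  have hα1 : alphaMin E ≤ 1 := alphaMin_le_one E
  set MR := ⨆ j : {j : V // j ∈ R}, exec.state j.1 s with hMRdef
  set mR := ⨅ j : {j : V // j ∈ R}, exec.state j.1 s with hmRdef
  have hstateU : ∀ t : ℕ, ∀ i, i ∉ F → exec.state i t ≤ Umax exec t := by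
    intro t i hi
    rw [Umax]
    exact le_ciSup (f := fun i : {i : V // i ∉ F} => exec.state i.1 t)
      (Set.Finite.bddAbove (Set.finite_range _)) ⟨i, hi⟩
  have hstateL : ∀ t : ℕ, ∀ i, i ∉ F → muMin exec t ≤ exec.state i t := by
    intro t i hi
    rw [muMin]
    exact ciInf_le (f := fun i : {i : V // i ∉ F} => exec.state i.1 t)
      (Set.Finite.bddBelow (Set.finite_range _)) ⟨i, hi⟩
  have hMRle : ∀ j ∈ R, exec.state j s ≤ MR := by
    intro j hj
    rw [hMRdef]
    exact le_ciSup (f := fun j : {j : V // j ∈ R} => exec.state j.1 s)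
      (Set.Finite.bddAbove (Set.finite_range _)) ⟨j, hj⟩
  have hmRle : ∀ j ∈ R, mR ≤ exec.state j s := by
    intro j hj
    rw [hmRdef]
    exact ciInf_le (f := fun j : {j : V // j ∈ R} => exec.state j.1 s)
      (Set.Finite.bddBelow (Set.finite_range _)) ⟨j, hj⟩
  have hMRU : MR ≤ Umax exec s := by
    rw [hMRdef]
    exact ciSup_le (fun j => hstateU s j.1 (hRF j.1 j.2))
  have hmuR : muMin exec s ≤ mR := by
    rw [hmRdef]
    exact le_ciInf (fun j => hstateL s j.1 (hRF j.1 j.2))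
  have hbox : ∀ τ : ℕ, ∀ i, i ∉ F →
      muMin exec s ≤ exec.state i (s + τ) ∧ exec.state i (s + τ) ≤ Umax exec s := by
    intro τ
    induction τ with
    | zero => intro i hi; exact ⟨hstateL s i hi, hstateU s i hi⟩
    | succ τ ih =>
      intro i hi
      have ht : 1 ≤ s + (τ + 1) := by omega
      have ht1 : s + (τ + 1) - 1 = s + τ := by omega
      constructor
      · have h := exec.step_ge (f := f) ht hi hF (hsuff.1 i) (le_refl (muMin exec s))
          (fun j hj => by rw [ht1]; exact (ih j hj).1)
          (Or.inl (by rw [ht1]; exact (ih i hi).1))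
        linarith [h]
      · have h := exec.step_le (f := f) ht hi hF (hsuff.1 i) (le_refl (Umax exec s))
          (fun j hj => by rw [ht1]; exact (ih j hj).2)
          (Or.inl (by rw [ht1]; exact (ih i hi).2))
        linarith [h]
  obtain ⟨hl0, As, Cs, hA0, hC0, hAl, hCl, hCne, hstep⟩ := hprop
  have hsub : ∀ τ, τ ≤ l → As τ ⊆ R ∪ L ∧ Cs τ ⊆ L := by
    intro τ
    induction τ with
    | zero =>
      intro _
      rw [hA0, hC0]
      exact ⟨Finset.subset_union_left, Finset.Subset.refl L⟩
    | succ τ ih =>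
      intro hτ
      obtain ⟨hsA, hsC⟩ := ih (by omega)
      have h := hstep τ (by omega)
      rw [h.2.1, h.2.2]
      have hin : inRel E (As τ) (Cs τ) ⊆ Cs τ := Finset.filter_subset _ _
      constructor
      · exact Finset.union_subset hsA ((hin.trans hsC).trans Finset.subset_union_right)
      · exact Finset.sdiff_subset.trans hsC
  have claim : ∀ τ, τ ≤ l → ∀ i ∈ As τ,
      alphaMin E ^ τ * mR + (1 - alphaMin E ^ τ) * muMin exec s ≤ exec.state i (s + τ) ∧
      exec.state i (s + τ) ≤ alphaMin E ^ τ * MR + (1 - alphaMin E ^ τ) * Umax exec s := by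
    intro τ
    induction τ with
    | zero =>
      intro _ i hi
      rw [hA0] at hi
      simp only [pow_zero, Nat.add_zero]
      constructor
      · linarith [hmRle i hi]
      · linarith [hMRle i hi]
    | succ τ ih =>
      intro hτ i hi
      have hτl : τ < l := hτ
      have ihall := ih (le_of_lt hτl)
      have hAsub := (hsub τ (le_of_lt hτl)).1
      have hiF : i ∉ F := hVF i ((hsub (τ + 1) hτ).1 hi)
      have ht : 1 ≤ s + (τ + 1) := by omega
      have ht1 : s + (τ + 1) - 1 = s + τ := by omega
      have hτ0 : (0:ℝ) ≤ alphaMin E ^ τ := pow_nonneg hα0.le τ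
      have hτ1 : alphaMin E ^ τ ≤ 1 := pow_le_one₀ hα0.le hα1
      have hbUle : alphaMin E ^ τ * MR + (1 - alphaMin E ^ τ) * Umax exec s ≤ Umax exec s := by
        nlinarith [hMRU]
      have hbLge : muMin exec s ≤ alphaMin E ^ τ * mR + (1 - alphaMin E ^ τ) * muMin exec s := by
        nlinarith [hmuR]
      rw [(hstep τ hτl).2.1] at hi
      have hwα : alphaMin E ≤ middleWeight E i := alphaMin_le E i
      have hw1 : middleWeight E i ≤ 1 := middleWeight_le_one E i
      -- the "seed" value below/above the bound
      have honeU : exec.state i (s + (τ + 1) - 1) ≤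
            alphaMin E ^ τ * MR + (1 - alphaMin E ^ τ) * Umax exec s ∨
          ∃ k ∈ exec.Ms (s + (τ + 1)) i, exec.w (s + (τ + 1)) i k ≤
            alphaMin E ^ τ * MR + (1 - alphaMin E ^ τ) * Umax exec s := by
        rcases Finset.mem_union.1 hi with hiA | hiIn
        · left; rw [ht1]; exact (ihall i hiA).2
        · right
          simp only [inRel, Finset.mem_filter] at hiIn
          apply exec.exists_M_le ht hiF hiIn.2
          intro j hj
          have hjA : j ∈ As τ := (Finset.mem_inter.1 hj).2
          have hjF : j ∉ F := hVF j (hAsub hjA)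
          rw [exec.w_honest _ ht i hiF j (Finset.mem_inter.1 hj).1 hjF, ht1]
          exact (ihall j hjA).2
      have honeL : alphaMin E ^ τ * mR + (1 - alphaMin E ^ τ) * muMin exec s ≤
            exec.state i (s + (τ + 1) - 1) ∨
          ∃ k ∈ exec.Ms (s + (τ + 1)) i, alphaMin E ^ τ * mR +
            (1 - alphaMin E ^ τ) * muMin exec s ≤ exec.w (s + (τ + 1)) i k := by
        rcases Finset.mem_union.1 hi with hiA | hiIn
        · left; rw [ht1]; exact (ihall i hiA).1
        · right
          simp only [inRel, Finset.mem_filter] at hiIn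
          apply exec.exists_M_ge ht hiF hiIn.2
          intro j hj
          have hjA : j ∈ As τ := (Finset.mem_inter.1 hj).2
          have hjF : j ∉ F := hVF j (hAsub hjA)
          rw [exec.w_honest _ ht i hiF j (Finset.mem_inter.1 hj).1 hjF, ht1]
          exact (ihall j hjA).1
      constructor
      · have h := exec.step_ge (f := f) ht hiF hF (hsuff.1 i) hbLge
          (fun j hj => by rw [ht1]; exact (hbox τ j hj).1) honeL
        have hexp : alphaMin E ^ (τ + 1) = alphaMin E ^ τ * alphaMin E := pow_succ _ _
        rw [hexp]
        nlinarith [h, mul_nonneg (sub_nonneg.2 hwα)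
          (sub_nonneg.2 hbLge)]
      · have h := exec.step_le (f := f) ht hiF hF (hsuff.1 i) hbUle
          (fun j hj => by rw [ht1]; exact (hbox τ j hj).2) honeU
        have hexp : alphaMin E ^ (τ + 1) = alphaMin E ^ τ * alphaMin E := pow_succ _ _
        rw [hexp]
        nlinarith [h, mul_nonneg (sub_nonneg.2 hwα)
          (sub_nonneg.2 hbUle)]
  have hAllF : ∀ i : V, i ∉ F → i ∈ As l := by
    intro i hi
    rw [hAl, hpart]
    exact Finset.mem_sdiff.2 ⟨Finset.mem_univ i, hi⟩
  have hUl : Umax exec (s + l) ≤ alphaMin E ^ l * MR + (1 - alphaMin E ^ l) * Umax exec s := by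
    apply ciSup_le
    rintro ⟨i, hi⟩
    exact (claim l le_rfl i (hAllF i hi)).2
  have hml : alphaMin E ^ l * mR + (1 - alphaMin E ^ l) * muMin exec s ≤ muMin exec (s + l) := by
    apply le_ciInf
    rintro ⟨i, hi⟩
    exact (claim l le_rfl i (hAllF i hi)).1
  have hl0' : (0:ℝ) ≤ alphaMin E ^ l := pow_nonneg hα0.le l
  have hmus : muMin exec s ≤ Umax exec s :=
    le_trans (hstateL s r (hRF r hrR)) (hstateU s r (hRF r hrR))
  nlinarith [hUl, hml, mul_le_mul_of_nonneg_left hconf hl0']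
end

section
/- Suppose G(V,E) satisfies the sufficient condition for parameter f, and let F be the set of faulty nodes with |F| ≤ f. Consider an execution of the Middle algorithm, a fault-free node i ∈ V∖F, an iteration t ≥ 1 with middle set M at node i, and a real Ψ with Ψ ≥ U[t−1]. Then for every j ∈ {i} ∪ M, Ψ − v_i[t] ≥ a_i·(Ψ − w_j[t,i]), where we set w_i[t,i] := v_i[t−1]. In particular, for every fault-free j ∈ {i} ∪ M, Ψ − v_i[t] ≥ a_i·(Ψ − v_j[t−1]). -/
open Finset Filter

variable {V : Type} [Fintype V] [DecidableEq V]

/-! Since `a_i = 1/(|M| + 1)`, the update rule reads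
`Ψ - v_i[t] = a_i · ((Ψ - v_i[t-1]) + ∑_{j ∈ M} (Ψ - w_j[t,i]))`, and every summand is nonnegative:
`v_i[t-1] ≤ U[t-1] ≤ Ψ`, and a middle value is at most every value from `T`. Either some node of `T`
is fault-free, so that value is `≤ Ψ`, or `T ⊆ F`; as `|T| = ⌊|N_i^-|/3⌋ ≥ f ≥ |F|`, then `T = F`
and the middle value itself comes from a fault-free node. -/

lemma state_le_Umax {E : Finset (V × V)} {F : Finset V} (exec : MiddleExec E F) {k : V}
    (hk : k ∉ F) (s : ℕ) : exec.state k s ≤ Umax exec s :=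
  le_ciSup (f := fun p : {i : V // i ∉ F} => exec.state p.1 s)
    (Set.finite_range _).bddAbove ⟨k, hk⟩

namespace MiddleExec

variable {E : Finset (V × V)} {F : Finset V} (exec : MiddleExec E F) {t : ℕ} {i : V}

lemma Ms_subset_NinSet (ht : 1 ≤ t) (hi : i ∉ F) : exec.Ms t i ⊆ NinSet E i :=
  exec.part_union t ht i hi ▸ subset_union_right

lemma Ts_subset_NinSet (ht : 1 ≤ t) (hi : i ∉ F) : exec.Ts t i ⊆ NinSet E i :=
  exec.part_union t ht i hi ▸ subset_union_right.trans subset_union_left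

lemma card_Ms (ht : 1 ≤ t) (hi : i ∉ F) :
    (exec.Ms t i).card = (NinSet E i).card - 2 * ((NinSet E i).card / 3) := by
  have hcard : (exec.Bs t i).card + (exec.Ts t i).card + (exec.Ms t i).card = (NinSet E i).card := by
    rw [← exec.part_union t ht i hi, card_union_of_disjoint, card_union_of_disjoint
      (exec.disj_BT t ht i hi)]
    exact disjoint_union_left.mpr ⟨exec.disj_BM t ht i hi, exec.disj_TM t ht i hi⟩
  have := exec.card_B t ht i hi
  have := exec.card_T t ht i hi
  omega

lemma middleWeight_eq_inv_card_Ms_add_one (ht : 1 ≤ t) (hi : i ∉ F) :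
    middleWeight E i = ((exec.Ms t i).card + 1 : ℝ)⁻¹ := by
  rw [middleWeight, ← exec.card_Ms ht hi]
  push_cast
  rfl

lemma sub_state_eq (ht : 1 ≤ t) (hi : i ∉ F) (Ψ : ℝ) :
    Ψ - exec.state i t = middleWeight E i *
      ((Ψ - exec.state i (t - 1)) + ∑ j ∈ exec.Ms t i, (Ψ - exec.w t i j)) := by
  rw [exec.update t ht i hi, sum_sub_distrib, sum_const, nsmul_eq_mul,
    exec.middleWeight_eq_inv_card_Ms_add_one ht hi]
  field_simp
  ring

lemma w_le_of_mem_Ms (ht : 1 ≤ t) (hi : i ∉ F) (hF : 3 * F.card ≤ (NinSet E i).card) {Ψ : ℝ}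
    (hΨ : ∀ k ∉ F, exec.state k (t - 1) ≤ Ψ) {j : V} (hj : j ∈ exec.Ms t i) :
    exec.w t i j ≤ Ψ := by
  by_cases hT : ∃ k ∈ exec.Ts t i, k ∉ F
  · obtain ⟨k, hkT, hkF⟩ := hT
    calc exec.w t i j ≤ exec.w t i k := exec.le_MT t ht i hi j hj k hkT
      _ = exec.state k (t - 1) := exec.w_honest t ht i hi k (exec.Ts_subset_NinSet ht hi hkT) hkF
      _ ≤ Ψ := hΨ k hkF
  · have hTF : exec.Ts t i ⊆ F := fun k hk => by_contra fun hkF => hT ⟨k, hk, hkF⟩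
    have hTeq : exec.Ts t i = F :=
      eq_of_subset_of_card_le hTF (by rw [exec.card_T t ht i hi]; omega)
    have hjF : j ∉ F := hTeq ▸ disjoint_right.mp (exec.disj_TM t ht i hi) hj
    rw [exec.w_honest t ht i hi j (exec.Ms_subset_NinSet ht hi hj) hjF]
    exact hΨ j hjF

lemma middleWeight_mul_sub_state_le (ht : 1 ≤ t) (hi : i ∉ F) {Ψ : ℝ}
    (hw : ∀ j ∈ exec.Ms t i, exec.w t i j ≤ Ψ) :
    middleWeight E i * (Ψ - exec.state i (t - 1)) ≤ Ψ - exec.state i t := by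
  rw [exec.sub_state_eq ht hi, exec.middleWeight_eq_inv_card_Ms_add_one ht hi]
  gcongr
  exact le_add_of_nonneg_right (sum_nonneg fun j hj => sub_nonneg.mpr (hw j hj))

lemma middleWeight_mul_sub_w_le (ht : 1 ≤ t) (hi : i ∉ F) {Ψ : ℝ}
    (hs : exec.state i (t - 1) ≤ Ψ) (hw : ∀ j ∈ exec.Ms t i, exec.w t i j ≤ Ψ)
    {j : V} (hj : j ∈ exec.Ms t i) :
    middleWeight E i * (Ψ - exec.w t i j) ≤ Ψ - exec.state i t := by
  rw [exec.sub_state_eq ht hi, exec.middleWeight_eq_inv_card_Ms_add_one ht hi]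
  gcongr
  calc Ψ - exec.w t i j ≤ ∑ k ∈ exec.Ms t i, (Ψ - exec.w t i k) :=
        single_le_sum (fun k hk => sub_nonneg.mpr (hw k hk)) hj
    _ ≤ _ := le_add_of_nonneg_left (sub_nonneg.mpr hs)

end MiddleExec

theorem upper_bound_lemma_general
    (E : Finset (V × V)) (f : ℕ)
    (hsuff : SuffCond E f)
    (F : Finset V) (hF : F.card ≤ f)
    (exec : MiddleExec E F)
    (i : V) (hi : i ∉ F)
    (t : ℕ) (ht : 1 ≤ t)
    (Ψ : ℝ) (hΨ : Umax exec (t - 1) ≤ Ψ) :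
    (∀ j ∈ insert i (exec.Ms t i),
      Ψ - exec.state i t ≥
        middleWeight E i * (Ψ - (if j = i then exec.state i (t - 1) else exec.w t i j))) ∧
    (∀ j ∈ insert i (exec.Ms t i), j ∉ F →
      Ψ - exec.state i t ≥ middleWeight E i * (Ψ - exec.state j (t - 1))) := by
  have hs : ∀ k ∉ F, exec.state k (t - 1) ≤ Ψ := fun k hk => (state_le_Umax exec hk _).trans hΨ
  have hw : ∀ j ∈ exec.Ms t i, exec.w t i j ≤ Ψ :=
    fun j => exec.w_le_of_mem_Ms ht hi (by linarith [hsuff.1 i]) hs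
  have hself := exec.middleWeight_mul_sub_state_le ht hi hw
  have hmid {j} (hj : j ∈ exec.Ms t i) := exec.middleWeight_mul_sub_w_le ht hi (hs i hi) hw hj
  constructor
  · intro j hj
    split_ifs with hji
    · exact hself
    · exact hmid ((mem_insert.mp hj).resolve_left hji)
  · rintro j hj hjF
    rcases eq_or_ne j i with rfl | hji
    · exact hself
    · have hjM := (mem_insert.mp hj).resolve_left hji
      rw [← exec.w_honest t ht i hi j (exec.Ms_subset_NinSet ht hi hjM) hjF]
      exact hmid hjM

/-- upper-bound lemma on `Ψ - v_i[t]`. -/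
theorem upper_bound_lemma
    (E : Finset (V × V)) (f : ℕ)
    (hn : 2 ≤ Fintype.card V)
    (hloop : ∀ v : V, (v, v) ∉ E)
    (hsuff : SuffCond E f)
    (F : Finset V) (hF : F.card ≤ f)
    (exec : MiddleExec E F)
    (i : V) (hi : i ∉ F)
    (t : ℕ) (ht : 1 ≤ t)
    (Ψ : ℝ) (hΨ : Umax exec (t - 1) ≤ Ψ) :
    (∀ j ∈ insert i (exec.Ms t i),
      Ψ - exec.state i t ≥
        middleWeight E i * (Ψ - (if j = i then exec.state i (t - 1) else exec.w t i j))) ∧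
    (∀ j ∈ insert i (exec.Ms t i), j ∉ F →
      Ψ - exec.state i t ≥ middleWeight E i * (Ψ - exec.state j (t - 1))) :=
  upper_bound_lemma_general E f hsuff F hF exec i hi t ht Ψ hΨ
end
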